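/- Let T = conv(a,b,c,d) be a tetrahedron in ℝ³ with affinely independent vertices, and for real r < s let P = Φ_{r,s}(T) ⊂ ℝ⁴ be the prism conv(ψ_r(T) ∪ ψ_s(T)), where ψ_t(x) = (x, t). Then the four pentatopes τ₁ = conv(a₀,b₀,c₀,d₀,d₁), τ₂ = conv(a₀,b₀,c₀,c₁,d₁), τ₃ = conv(a₀,b₀,b₁,c₁,d₁), τ₄ = conv(a₀,a₁,b₁,c₁,d₁) (where x₀ = ψ_r(x), x₁ = ψ_s(x)) have union equal to P. -/
import Mathlib


/-- ψ_t : ℝ³ → ℝ⁴, appending the coordinate t. -/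
def lift (t : ℝ) (x : Fin 3 → ℝ) : Fin 4 → ℝ := Fin.snoc x t

private lemma mem5 {x1 x2 x3 x4 x5 p : Fin 4 → ℝ} {c1 c2 c3 c4 c5 : ℝ}
    (h1 : 0 ≤ c1) (h2 : 0 ≤ c2) (h3 : 0 ≤ c3) (h4 : 0 ≤ c4) (h5 : 0 ≤ c5)
    (hsum : c1 + c2 + c3 + c4 + c5 = 1)
    (hp : p = c1 • x1 + c2 • x2 + c3 • x3 + c4 • x4 + c5 • x5) :
    p ∈ convexHull ℝ ({x1, x2, x3, x4, x5} : Set (Fin 4 → ℝ)) := by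
  refine mem_convexHull_of_exists_fintype ![c1, c2, c3, c4, c5] ![x1, x2, x3, x4, x5]
    ?_ ?_ ?_ ?_
  · intro i; fin_cases i <;> assumption
  · rw [Fin.sum_univ_five]; exact hsum
  · intro i; fin_cases i <;> simp
  · rw [Fin.sum_univ_five]; exact hp.symm

/-- The four pentatopes of the prism subdivision cover the prism
Φ_{r,s}(T) = conv(ψ_r({a,b,c,d}) ∪ ψ_s({a,b,c,d})). -/
theorem prism_subdivision_union
    (a b c d : Fin 3 → ℝ) (hT : AffineIndependent ℝ ![a, b, c, d])
    (r s : ℝ) (hrs : r < s) :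
    convexHull ℝ {lift r a, lift r b, lift r c, lift r d, lift s d} ∪
      convexHull ℝ {lift r a, lift r b, lift r c, lift s c, lift s d} ∪
      convexHull ℝ {lift r a, lift r b, lift s b, lift s c, lift s d} ∪
      convexHull ℝ {lift r a, lift s a, lift s b, lift s c, lift s d} =
    convexHull ℝ ({lift r a, lift r b, lift r c, lift r d,
      lift s a, lift s b, lift s c, lift s d} : Set (Fin 4 → ℝ)) := by
  apply Set.Subset.antisymm
  · refine Set.union_subset (Set.union_subset (Set.union_subset ?_ ?_) ?_) ?_ <;>
      apply convexHull_mono <;> intro x hx <;> simp only [Set.mem_insert_iff,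
        Set.mem_singleton_iff] at hx ⊢ <;> tauto
  · intro p hp
    set v : Fin 8 → (Fin 4 → ℝ) := ![lift r a, lift r b, lift r c, lift r d,
      lift s a, lift s b, lift s c, lift s d] with hv
    have hrange : ({lift r a, lift r b, lift r c, lift r d, lift s a, lift s b,
        lift s c, lift s d} : Set (Fin 4 → ℝ)) = Set.range v := by
      ext x
      simp only [hv, Matrix.range_cons, Matrix.range_empty, Set.union_empty,
        Set.mem_insert_iff, Set.mem_union, Set.mem_singleton_iff, Set.union_singleton]
      tauto
    rw [hrange, convexHull_range_eq_exists_affineCombination] at hp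
    obtain ⟨t, w, hw0, hw1, hp⟩ := hp
    rw [Finset.affineCombination_eq_linear_combination t v w hw1] at hp
    set W : Fin 8 → ℝ := fun i => if i ∈ t then w i else 0 with hW
    have hW0 : ∀ i, 0 ≤ W i := by
      intro i; by_cases h : i ∈ t <;> simp [hW, h, hw0 i]
    have hW1 : W 0 + W 1 + W 2 + W 3 + W 4 + W 5 + W 6 + W 7 = 1 := by
      rw [← Fin.sum_univ_eight, ← hw1]; simp [hW, Finset.sum_ite_mem]
    have hp' : p = ∑ i, W i • v i := by
      rw [← hp]; simp [hW, ite_smul, Finset.sum_ite_mem]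
    have hp8 : p = W 0 • lift r a + W 1 • lift r b + W 2 • lift r c + W 3 • lift r d +
        W 4 • lift s a + W 5 • lift s b + W 6 • lift s c + W 7 • lift s d := by
      rw [hp', Fin.sum_univ_eight]; rfl
    have hkey : ∀ x : Fin 3 → ℝ,
        lift s x = lift r x + Fin.snoc (0 : Fin 3 → ℝ) (s - r) := by
      intro x; funext j
      refine Fin.lastCases ?_ (fun i => ?_) j
      · simp only [lift, Pi.add_apply, Fin.snoc_last]
        ring
      · simp only [lift, Pi.add_apply, Fin.snoc_castSucc, Pi.zero_apply, add_zero]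
    simp only [hkey] at hp8
    have h0 := hW0 0
    have h1 := hW0 1
    have h2 := hW0 2
    have h3 := hW0 3
    have h4 := hW0 4
    have h5 := hW0 5
    have h6 := hW0 6
    have h7 := hW0 7
    rcases le_or_gt (W 4 + W 5 + W 6 + W 7) (W 3 + W 7) with hc1 | hc1
    · left; left; left
      refine mem5 (c1 := W 0 + W 4) (c2 := W 1 + W 5) (c3 := W 2 + W 6)
        (c4 := (W 3 + W 7) - (W 4 + W 5 + W 6 + W 7)) (c5 := W 4 + W 5 + W 6 + W 7)
        (by linarith) (by linarith) (by linarith) (by linarith) (by linarith)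
        (by linarith) ?_
      rw [hp8]; simp only [hkey]; module
    · rcases le_or_gt (W 4 + W 5 + W 6 + W 7) (W 3 + W 7 + (W 2 + W 6)) with hc2 | hc2
      · left; left; right
        refine mem5 (c1 := W 0 + W 4) (c2 := W 1 + W 5)
          (c3 := (W 2 + W 6) + (W 3 + W 7) - (W 4 + W 5 + W 6 + W 7))
          (c4 := (W 4 + W 5 + W 6 + W 7) - (W 3 + W 7)) (c5 := W 3 + W 7)
          (by linarith) (by linarith) (by linarith) (by linarith) (by linarith)
          (by linarith) ?_
        rw [hp8]; simp only [hkey]; module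
      · rcases le_or_gt (W 4 + W 5 + W 6 + W 7) (W 3 + W 7 + (W 2 + W 6) + (W 1 + W 5))
          with hc3 | hc3
        · left; right
          refine mem5 (c1 := W 0 + W 4)
            (c2 := (W 1 + W 5) + (W 2 + W 6) + (W 3 + W 7) - (W 4 + W 5 + W 6 + W 7))
            (c3 := (W 4 + W 5 + W 6 + W 7) - (W 2 + W 6) - (W 3 + W 7))
            (c4 := W 2 + W 6) (c5 := W 3 + W 7)
            (by linarith) (by linarith) (by linarith) (by linarith) (by linarith)
            (by linarith) ?_
          rw [hp8]; simp only [hkey]; module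
        · right
          refine mem5 (c1 := 1 - (W 4 + W 5 + W 6 + W 7))
            (c2 := (W 4 + W 5 + W 6 + W 7) - (W 1 + W 5) - (W 2 + W 6) - (W 3 + W 7))
            (c3 := W 1 + W 5) (c4 := W 2 + W 6) (c5 := W 3 + W 7)
            (by linarith) (by linarith) (by linarith) (by linarith) (by linarith)
            (by linarith) ?_
          rw [hp8]; simp only [hkey]
          have : (1 : ℝ) = W 0 + W 1 + W 2 + W 3 + W 4 + W 5 + W 6 + W 7 := hW1.symm
          rw [this]; module
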